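/- Let S and T be restriction semigroups with respect to semilattices E and F respectively, and let θ : S → T be a (∨,r)-premorphism. Then: (a) if e is an idempotent of S then eθ is an idempotent of T; (b) if e ∈ E then eθ ∈ F; (c) (sθ)⁺ = s⁺θ and (sθ)⁎ = s⁎θ for all s ∈ S; (d) θ is order-preserving with respect to the natural partial orders. -/
import Mathlib


universe u v w

/-- Identities of a partial binary operation given by definedness relation `D`
and value function `mul`: idempotents acting as left/right identity whenever
the relevant products are defined. -/
def IsIdOf {C : Type u} (D : C → C → Prop) (mul : C → C → C) (e : C) : Prop :=
  D e e ∧ mul e e = e ∧ (∀ x, D e x → mul e x = x) ∧ (∀ x, D x e → mul x e = x)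

/-- A small category, presented as a set with a partial binary operation:
`D x y` means the product `x·y` is defined, and `mul x y` is its value
(meaningful only when `D x y` holds). -/
structure SmallCat (C : Type u) where
  D : C → C → Prop
  mul : C → C → C
  d : C → C
  r : C → C
  /-- (Ca1): ∃ x·(y·z) ↔ ∃ (x·y)·z -/
  ca1 : ∀ x y z : C, (D y z ∧ D x (mul y z)) ↔ (D x y ∧ D (mul x y) z)
  /-- (Ca1): associativity when defined -/
  ca1_eq : ∀ x y z : C, D x y → D y z → mul x (mul y z) = mul (mul x y) z
  /-- (Ca2): ∃ x·(y·z) ↔ ∃ x·y and ∃ y·z -/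
  ca2 : ∀ x y z : C, (D y z ∧ D x (mul y z)) ↔ (D x y ∧ D y z)
  /-- (Ca3): existence and uniqueness of domain and range identities -/
  d_id : ∀ x, IsIdOf D mul (d x)
  r_id : ∀ x, IsIdOf D mul (r x)
  d_def : ∀ x, D (d x) x
  r_def : ∀ x, D x (r x)
  d_unique : ∀ x e, IsIdOf D mul e → D e x → e = d x
  r_unique : ∀ x e, IsIdOf D mul e → D x e → e = r x
  /-- x·y is defined iff r(x) = d(y) -/
  defined_iff : ∀ x y, D x y ↔ r x = d y

/-- An ordered category: a small category with a partial order satisfying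
(Or1)–(Or3), with corestriction `cores a f = a|f` and restriction
`restr f a = f|a`. -/
structure OrdCat (C : Type u) extends SmallCat C where
  le : C → C → Prop
  le_refl : ∀ a, le a a
  le_trans : ∀ a b c, le a b → le b c → le a c
  le_antisymm : ∀ a b, le a b → le b a → a = b
  or1 : ∀ a b a' b', le a a' → le b b' → D a b → D a' b' → le (mul a b) (mul a' b')
  or2d : ∀ a b, le a b → le (d a) (d b)
  or2r : ∀ a b, le a b → le (r a) (r b)
  cores : C → C → C
  restr : C → C → C
  cores_le : ∀ a f, IsIdOf D mul f → le f (r a) → le (cores a f) a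
  cores_r : ∀ a f, IsIdOf D mul f → le f (r a) → r (cores a f) = f
  cores_unique : ∀ a f, IsIdOf D mul f → le f (r a) →
    ∀ b, le b a → r b = f → b = cores a f
  restr_le : ∀ f a, IsIdOf D mul f → le f (d a) → le (restr f a) a
  restr_d : ∀ f a, IsIdOf D mul f → le f (d a) → d (restr f a) = f
  restr_unique : ∀ f a, IsIdOf D mul f → le f (d a) →
    ∀ b, le b a → d b = f → b = restr f a

/-- An inductive category: an ordered category in which any two identities
have a greatest lower bound among the identities. -/
structure IndCat (C : Type u) extends OrdCat C where
  meet : C → C → C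
  meet_id : ∀ e f, IsIdOf D mul e → IsIdOf D mul f → IsIdOf D mul (meet e f)
  meet_le_left : ∀ e f, IsIdOf D mul e → IsIdOf D mul f → le (meet e f) e
  meet_le_right : ∀ e f, IsIdOf D mul e → IsIdOf D mul f → le (meet e f) f
  meet_glb : ∀ e f g, IsIdOf D mul e → IsIdOf D mul f → IsIdOf D mul g →
    le g e → le g f → le g (meet e f)

/-- The pseudoproduct a⊗b = (a|(r(a)∧d(b))) · ((r(a)∧d(b))|b) of an
inductive category. -/
def IndCat.pp {C : Type u} (K : IndCat C) (a b : C) : C :=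
  K.mul (K.cores a (K.meet (K.r a) (K.d b))) (K.restr (K.meet (K.r a) (K.d b)) b)

/-- An inductive groupoid: an inductive category with inverses. -/
structure IndGrpd (C : Type u) extends IndCat C where
  inv : C → C
  inv_def_right : ∀ x, D x (inv x)
  inv_def_left : ∀ x, D (inv x) x
  mul_inv : ∀ x, mul x (inv x) = d x
  inv_mul : ∀ x, mul (inv x) x = r x

/-- A (two-sided) restriction semigroup with respect to a subsemilattice `E`
of idempotents, with unary operations `plus` (a⁺) and `star` (a⁎). -/
structure RSgrp (S : Type u) where
  mul : S → S → S
  assoc : ∀ a b c : S, mul (mul a b) c = mul a (mul b c)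
  E : Set S
  E_idem : ∀ e ∈ E, mul e e = e
  E_comm : ∀ e ∈ E, ∀ f ∈ E, mul e f = mul f e
  E_mul_mem : ∀ e ∈ E, ∀ f ∈ E, mul e f ∈ E
  plus : S → S
  star : S → S
  plus_mem : ∀ a, plus a ∈ E
  star_mem : ∀ a, star a ∈ E
  /-- a R̃_E a⁺ : for all e ∈ E, ea = a ↔ ea⁺ = a⁺ -/
  plus_spec : ∀ a : S, ∀ e ∈ E, (mul e a = a ↔ mul e (plus a) = plus a)
  /-- a L̃_E a⁎ : for all e ∈ E, ae = a ↔ a⁎e = a⁎ -/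
  star_spec : ∀ a : S, ∀ e ∈ E, (mul a e = a ↔ mul (star a) e = star a)
  /-- R̃_E is a left congruence -/
  rtilde_left_cong : ∀ a b c : S,
    (∀ e ∈ E, mul e a = a ↔ mul e b = b) →
    ∀ e ∈ E, (mul e (mul c a) = mul c a ↔ mul e (mul c b) = mul c b)
  /-- L̃_E is a right congruence -/
  ltilde_right_cong : ∀ a b c : S,
    (∀ e ∈ E, mul a e = a ↔ mul b e = b) →
    ∀ e ∈ E, (mul (mul a c) e = mul a c ↔ mul (mul b c) e = mul b c)
  /-- ae = (ae)⁺a -/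
  ae_eq : ∀ a : S, ∀ e ∈ E, mul a e = mul (plus (mul a e)) a
  /-- ea = a(ea)⁎ -/
  ea_eq : ∀ a : S, ∀ e ∈ E, mul e a = mul a (star (mul e a))

/-- The natural partial order of a restriction semigroup: a ≤ b iff a = a⁺b. -/
def RSgrp.NatLe {S : Type u} (R : RSgrp S) (a b : S) : Prop :=
  a = R.mul (R.plus a) b

/-- `K` is the inductive category induced by the restriction semigroup `R`
via the restricted product and the natural partial order. -/
def InducedIndCat {S : Type u} (R : RSgrp S) (K : IndCat S) : Prop :=
  (∀ a b, K.le a b ↔ R.NatLe a b) ∧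
  (∀ a b, K.D a b ↔ R.star a = R.plus b) ∧
  (∀ a b, K.D a b → K.mul a b = R.mul a b) ∧
  (∀ x, K.d x = R.plus x) ∧
  (∀ x, K.r x = R.star x) ∧
  (∀ e, IsIdOf K.D K.mul e ↔ e ∈ R.E) ∧
  (∀ f a, f ∈ R.E → K.le f (K.d a) → K.restr f a = R.mul f a) ∧
  (∀ a f, f ∈ R.E → K.le f (K.r a) → K.cores a f = R.mul a f) ∧
  (∀ e f, e ∈ R.E → f ∈ R.E → K.meet e f = R.mul e f)

/-- `R` is the restriction semigroup induced by the inductive category `K`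
via the pseudoproduct, with E = identities, a⁺ = d(a), a⁎ = r(a). -/
def InducedRSgrp {C : Type u} (K : IndCat C) (R : RSgrp C) : Prop :=
  R.mul = K.pp ∧ R.E = {e | IsIdOf K.D K.mul e} ∧
  (∀ a, R.plus a = K.d a) ∧ (∀ a, R.star a = K.r a)

/-- An inverse semigroup: every element has a unique inverse. -/
structure InvSgrp (S : Type u) where
  mul : S → S → S
  assoc : ∀ a b c : S, mul (mul a b) c = mul a (mul b c)
  inv : S → S
  inv_spec₁ : ∀ a, mul (mul a (inv a)) a = a
  inv_spec₂ : ∀ a, mul (mul (inv a) a) (inv a) = inv a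
  inv_unique : ∀ a b, mul (mul a b) a = a → mul (mul b a) b = b → b = inv a

/-- The natural partial order of an inverse semigroup: a ≤ b iff a = eb for
some idempotent e. -/
def InvSgrp.le {S : Type u} (Si : InvSgrp S) (a b : S) : Prop :=
  ∃ e, Si.mul e e = e ∧ a = Si.mul e b

/-- a⁺ = aa⁻¹ in an inverse semigroup. -/
def InvSgrp.plus {S : Type u} (Si : InvSgrp S) (a : S) : S := Si.mul a (Si.inv a)

/-- a⁎ = a⁻¹a in an inverse semigroup. -/
def InvSgrp.star {S : Type u} (Si : InvSgrp S) (a : S) : S := Si.mul (Si.inv a) a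

/-- A (∨,r)-premorphism between restriction semigroups:
(∨1) (st)θ ≤ (sθ)(tθ); (∨2) s⁺θ ≤ (sθ)⁺ and s⁎θ ≤ (sθ)⁎. -/
def IsVPre {S : Type u} {T : Type v} (R : RSgrp S) (R' : RSgrp T) (θ : S → T) : Prop :=
  (∀ s t, R'.NatLe (θ (R.mul s t)) (R'.mul (θ s) (θ t))) ∧
  (∀ s, R'.NatLe (θ (R.plus s)) (R'.plus (θ s))) ∧
  (∀ s, R'.NatLe (θ (R.star s)) (R'.star (θ s)))

/-- A (∧,r)-premorphism between restriction semigroups: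
(∧1) (sθ)(tθ) ≤ (st)θ; (∧2) (sθ)⁺ ≤ s⁺θ and (sθ)⁎ ≤ s⁎θ. -/
def IsWPre {S : Type u} {T : Type v} (R : RSgrp S) (R' : RSgrp T) (θ : S → T) : Prop :=
  (∀ s t, R'.NatLe (R'.mul (θ s) (θ t)) (θ (R.mul s t))) ∧
  (∀ s, R'.NatLe (R'.plus (θ s)) (θ (R.plus s))) ∧
  (∀ s, R'.NatLe (R'.star (θ s)) (θ (R.star s)))

/-- An ordered (∧,r)-premorphism: a (∧,r)-premorphism which is also
order-preserving for the natural partial orders. -/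
def IsOrderedWPre {S : Type u} {T : Type v} (R : RSgrp S) (R' : RSgrp T) (θ : S → T) : Prop :=
  IsWPre R R' θ ∧ ∀ s t, R.NatLe s t → R'.NatLe (θ s) (θ t)

/-- A strong (∧,r)-premorphism: a (∧,r)-premorphism satisfying
(∧1)′ (sθ)(tθ) = (sθ)⁺·((st)θ) = ((st)θ)·(tθ)⁎. -/
def IsStrongWPre {S : Type u} {T : Type v} (R : RSgrp S) (R' : RSgrp T) (θ : S → T) : Prop :=
  IsWPre R R' θ ∧
  (∀ s t, R'.mul (θ s) (θ t) = R'.mul (R'.plus (θ s)) (θ (R.mul s t))) ∧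
  (∀ s t, R'.mul (θ s) (θ t) = R'.mul (θ (R.mul s t)) (R'.star (θ t)))

/-- An ordered functor between ordered categories. -/
def IsOrderedFunctor {C : Type u} {D : Type v} (K : OrdCat C) (L : OrdCat D)
    (φ : C → D) : Prop :=
  (∀ x y, K.D x y → L.D (φ x) (φ y)) ∧
  (∀ x y, K.D x y → φ (K.mul x y) = L.mul (φ x) (φ y)) ∧
  (∀ x y, K.le x y → L.le (φ x) (φ y))

/-- (ICP1): if s·t is defined then (sψ)⊗(tψ) ≤ (s·t)ψ. -/
def ICP1 {C : Type u} {D : Type v} (K : IndCat C) (L : IndCat D) (ψ : C → D) : Prop :=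
  ∀ s t, K.D s t → L.le (L.pp (ψ s) (ψ t)) (ψ (K.mul s t))

/-- (ICP2): d(sψ) ≤ d(s)ψ and r(sψ) ≤ r(s)ψ. -/
def ICP2 {C : Type u} {D : Type v} (K : IndCat C) (L : IndCat D) (ψ : C → D) : Prop :=
  (∀ s, L.le (L.d (ψ s)) (ψ (K.d s))) ∧ (∀ s, L.le (L.r (ψ s)) (ψ (K.r s)))

/-- (ICP3): ψ is order-preserving. -/
def ICP3 {C : Type u} {D : Type v} (K : IndCat C) (L : IndCat D) (ψ : C → D) : Prop :=
  ∀ s t, K.le s t → L.le (ψ s) (ψ t)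

/-- (ICP4): (aψ)⊗(fψ) ≤ (a⊗f)ψ and (eψ)⊗(aψ) ≤ (e⊗a)ψ for identities e, f. -/
def ICP4 {C : Type u} {D : Type v} (K : IndCat C) (L : IndCat D) (ψ : C → D) : Prop :=
  (∀ a f, IsIdOf K.D K.mul f → L.le (L.pp (ψ a) (ψ f)) (ψ (K.pp a f))) ∧
  (∀ e a, IsIdOf K.D K.mul e → L.le (L.pp (ψ e) (ψ a)) (ψ (K.pp e a)))

/-- An inductive category prefunctor: (ICP1)–(ICP4). -/
def IsICP {C : Type u} {D : Type v} (K : IndCat C) (L : IndCat D) (ψ : C → D) : Prop :=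
  ICP1 K L ψ ∧ ICP2 K L ψ ∧ ICP3 K L ψ ∧ ICP4 K L ψ

/-- (ICP5): d((sψ)⊗(tψ)) = d(sψ)∧d((s⊗t)ψ) and
r((sψ)⊗(tψ)) = r((s⊗t)ψ)∧r(tψ). -/
def ICP5 {C : Type u} {D : Type v} (K : IndCat C) (L : IndCat D) (ψ : C → D) : Prop :=
  (∀ s t, L.d (L.pp (ψ s) (ψ t)) = L.meet (L.d (ψ s)) (L.d (ψ (K.pp s t)))) ∧
  (∀ s t, L.r (L.pp (ψ s) (ψ t)) = L.meet (L.r (ψ (K.pp s t))) (L.r (ψ t)))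

/-- A strong inductive category prefunctor: (ICP1)–(ICP4) together with (ICP5). -/
def IsStrongICP {C : Type u} {D : Type v} (K : IndCat C) (L : IndCat D) (ψ : C → D) : Prop :=
  IsICP K L ψ ∧ ICP5 K L ψ

/-- An ordered groupoid premorphism between inductive groupoids:
(ICP1), (IGP) (gψ)⁻¹ = g⁻¹ψ, and (ICP3). -/
def IsOGP {C : Type u} {D : Type v} (K : IndGrpd C) (L : IndGrpd D) (ψ : C → D) : Prop :=
  ICP1 K.toIndCat L.toIndCat ψ ∧
  (∀ g, L.inv (ψ g) = ψ (K.inv g)) ∧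
  ICP3 K.toIndCat L.toIndCat ψ

namespace RSgrp

theorem plus_mul {S : Type u} (R : RSgrp S) (a : S) : R.mul (R.plus a) a = a :=
  (R.plus_spec a (R.plus a) (R.plus_mem a)).mpr (R.E_idem _ (R.plus_mem a))

theorem mul_star {S : Type u} (R : RSgrp S) (a : S) : R.mul a (R.star a) = a :=
  (R.star_spec a (R.star a) (R.star_mem a)).mpr (R.E_idem _ (R.star_mem a))

theorem plus_of_mem {S : Type u} (R : RSgrp S) {e : S} (he : e ∈ R.E) : R.plus e = e := by
  have h1 : R.mul e (R.plus e) = R.plus e := (R.plus_spec e e he).mp (R.E_idem e he)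
  calc R.plus e = R.mul e (R.plus e) := h1.symm
    _ = R.mul (R.plus e) e := R.E_comm e he _ (R.plus_mem e)
    _ = e := R.plus_mul e

theorem plus_mul_mem {S : Type u} (R : RSgrp S) {e : S} (b : S) (he : e ∈ R.E) :
    R.plus (R.mul e b) = R.mul e (R.plus b) := by
  have hcong := R.rtilde_left_cong b (R.plus b) e (fun f hf => R.plus_spec b f hf)
  have hg1 : R.plus (R.mul e b) ∈ R.E := R.plus_mem _
  have hg2 : R.mul e (R.plus b) ∈ R.E := R.E_mul_mem e he _ (R.plus_mem b)
  have h12 : R.mul (R.plus (R.mul e b)) (R.mul e (R.plus b)) = R.mul e (R.plus b) :=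
    (hcong _ hg1).mp ((R.plus_spec (R.mul e b) _ hg1).mpr (R.E_idem _ hg1))
  have h21 : R.mul (R.mul e (R.plus b)) (R.plus (R.mul e b)) = R.plus (R.mul e b) :=
    (R.plus_spec (R.mul e b) _ hg2).mp ((hcong _ hg2).mpr (R.E_idem _ hg2))
  calc R.plus (R.mul e b)
      = R.mul (R.mul e (R.plus b)) (R.plus (R.mul e b)) := h21.symm
    _ = R.mul (R.plus (R.mul e b)) (R.mul e (R.plus b)) := R.E_comm _ hg2 _ hg1
    _ = R.mul e (R.plus b) := h12

theorem natLe_of_mul {S : Type u} (R : RSgrp S) {e a b : S} (he : e ∈ R.E)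
    (hab : a = R.mul e b) : R.NatLe a b := by
  unfold RSgrp.NatLe
  subst hab
  rw [R.plus_mul_mem b he, R.assoc, R.plus_mul]

end RSgrp

/-- Properties of a (∨,r)-premorphism θ: (a) it preserves
idempotents; (b) it maps E into F; (c) (sθ)⁺ = s⁺θ and (sθ)⁎ = s⁎θ;
(d) it is order-preserving. -/
theorem stmt_7 {S : Type u} {T : Type v} (R : RSgrp S) (R' : RSgrp T)
    (θ : S → T) (h : IsVPre R R' θ) :
    (∀ e, R.mul e e = e → R'.mul (θ e) (θ e) = θ e) ∧
    (∀ e ∈ R.E, θ e ∈ R'.E) ∧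
    (∀ s, R'.plus (θ s) = θ (R.plus s) ∧ R'.star (θ s) = θ (R.star s)) ∧
    (∀ s t, R.NatLe s t → R'.NatLe (θ s) (θ t)) := by
  -- θ maps all "plus" and "star" elements into F
  have hauxP : ∀ s, θ (R.plus s) ∈ R'.E := by
    intro s
    have hple : θ (R.plus s)
        = R'.mul (R'.plus (θ (R.plus s))) (R'.plus (θ s)) := h.2.1 s
    rw [hple]
    exact R'.E_mul_mem _ (R'.plus_mem _) _ (R'.plus_mem _)
  have hauxS : ∀ s, θ (R.star s) ∈ R'.E := by
    intro s
    have hsle : θ (R.star s)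
        = R'.mul (R'.plus (θ (R.star s))) (R'.star (θ s)) := h.2.2 s
    rw [hsle]
    exact R'.E_mul_mem _ (R'.plus_mem _) _ (R'.star_mem _)
  refine ⟨?_, ?_, ?_, ?_⟩
  · -- (a) idempotents are preserved
    intro e he
    have hle : θ e = R'.mul (R'.plus (θ e)) (R'.mul (θ e) (θ e)) := by
      have := h.1 e e
      rw [he] at this
      exact this
    rw [← R'.assoc, R'.plus_mul] at hle
    exact hle.symm
  · -- (b) E maps into F
    intro e he
    rw [← R.plus_of_mem he]
    exact hauxP e
  · -- (c) (sθ)⁺ = s⁺θ and (sθ)⁎ = s⁎θ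
    intro s
    constructor
    · have hpF := hauxP s
      have hple : θ (R.plus s)
          = R'.mul (R'.plus (θ (R.plus s))) (R'.plus (θ s)) := h.2.1 s
      rw [R'.plus_of_mem hpF] at hple
      -- hple : θ (R.plus s) = mul (θ (R.plus s)) (plus (θ s))
      have hxle : θ s = R'.mul (R'.plus (θ s)) (R'.mul (θ (R.plus s)) (θ s)) := by
        have := h.1 (R.plus s) s
        rw [R.plus_mul s] at this
        exact this
      have hgF : R'.mul (R'.plus (θ s)) (θ (R.plus s)) ∈ R'.E :=
        R'.E_mul_mem _ (R'.plus_mem _) _ hpF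
      have hgx : R'.mul (R'.mul (R'.plus (θ s)) (θ (R.plus s))) (θ s) = θ s :=
        (R'.assoc _ _ _).trans hxle.symm
      have key : R'.mul (R'.mul (R'.plus (θ s)) (θ (R.plus s))) (R'.plus (θ s))
          = R'.plus (θ s) := (R'.plus_spec (θ s) _ hgF).mp hgx
      have heq : R'.mul (R'.plus (θ s)) (θ (R.plus s)) = R'.plus (θ s) := by
        calc R'.mul (R'.plus (θ s)) (θ (R.plus s))
            = R'.mul (R'.plus (θ s)) (R'.mul (θ (R.plus s)) (R'.plus (θ s))) := by
              rw [← hple]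
          _ = R'.mul (R'.mul (R'.plus (θ s)) (θ (R.plus s))) (R'.plus (θ s)) :=
              (R'.assoc _ _ _).symm
          _ = R'.plus (θ s) := key
      calc R'.plus (θ s) = R'.mul (R'.plus (θ s)) (θ (R.plus s)) := heq.symm
        _ = R'.mul (θ (R.plus s)) (R'.plus (θ s)) :=
            R'.E_comm _ (R'.plus_mem _) _ hpF
        _ = θ (R.plus s) := hple.symm
    · have hqF := hauxS s
      have hqle : θ (R.star s)
          = R'.mul (R'.plus (θ (R.star s))) (R'.star (θ s)) := h.2.2 s
      rw [R'.plus_of_mem hqF] at hqle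
      -- hqle : θ (R.star s) = mul (θ (R.star s)) (star (θ s))
      have hxq : θ s = R'.mul (R'.plus (θ s)) (R'.mul (θ s) (θ (R.star s))) := by
        have := h.1 s (R.star s)
        rw [R.mul_star s] at this
        exact this
      have hxq2 : R'.mul (θ s) (θ (R.star s)) = θ s := by
        have h1 : θ s = R'.mul (R'.mul (R'.plus (θ s)) (θ s)) (θ (R.star s)) :=
          hxq.trans (R'.assoc _ _ _).symm
        rw [R'.plus_mul] at h1
        exact h1.symm
      have key : R'.mul (R'.star (θ s)) (θ (R.star s)) = R'.star (θ s) :=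
        (R'.star_spec (θ s) _ hqF).mp hxq2
      calc R'.star (θ s) = R'.mul (R'.star (θ s)) (θ (R.star s)) := key.symm
        _ = R'.mul (θ (R.star s)) (R'.star (θ s)) :=
            R'.E_comm _ (R'.star_mem _) _ hqF
        _ = θ (R.star s) := hqle.symm
  · -- (d) order-preserving
    intro s t hst
    have hst' : s = R.mul (R.plus s) t := hst
    have h1 : θ s = R'.mul (R'.plus (θ s)) (R'.mul (θ (R.plus s)) (θ t)) := by
      have := h.1 (R.plus s) t
      rw [← hst'] at this
      exact this
    have h2 : θ s = R'.mul (R'.mul (R'.plus (θ s)) (θ (R.plus s))) (θ t) :=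
      h1.trans (R'.assoc _ _ _).symm
    exact R'.natLe_of_mul (R'.E_mul_mem _ (R'.plus_mem _) _ (hauxP s)) h2
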